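/- arXiv:2206.12737 — 12 statements merged into one kernel-verified Lean document; each statement's English description precedes it below -/
import Mathlib

section
/- Let V be a real inner product space with an almost contact metric structure (φ, ξ, η) and let S be a symmetric endomorphism of V with Sξ = αξ for some real α. Define the k-th Cho operator F_X^{(k)}Y = ⟨φSX, Y⟩ξ - η(Y)φSX - kη(X)φY for a nonzero real number k, and L_ξ = φS - Sφ. If F_ξ^{(k)}(L_ξ X) - L_ξ(F_ξ^{(k)} X) = 0 for all X ∈ V, then φS = Sφ. -/
open RealInnerProductSpace

/-- Hopf case of Theorem 1.1: vanishing of the commutator of the k-th Cho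
operator `F_ξ^{(k)}` with the structure Lie operator `L_ξ = φS - Sφ`
forces `φS = Sφ`. -/
theorem stmt_1 {V : Type*} [NormedAddCommGroup V] [InnerProductSpace ℝ V]
    [FiniteDimensional ℝ V]
    (φ S : V →ₗ[ℝ] V) (ξ : V) (α k : ℝ)
    (hφ2 : ∀ X : V, φ (φ X) = -X + ⟪X, ξ⟫ • ξ)
    (hξ : ⟪ξ, ξ⟫ = 1)
    (hmetric : ∀ X Y : V, ⟪φ X, φ Y⟫ = ⟪X, Y⟫ - ⟪X, ξ⟫ * ⟪Y, ξ⟫)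
    (hskew : ∀ X Y : V, ⟪φ X, Y⟫ = -⟪X, φ Y⟫)
    (hφξ : φ ξ = 0)
    (hsym : ∀ X Y : V, ⟪S X, Y⟫ = ⟪X, S Y⟫)
    (hHopf : S ξ = α • ξ)
    (hk : k ≠ 0)
    (hcomm : ∀ X : V,
      (⟪φ (S ξ), φ (S X) - S (φ X)⟫ • ξ
        - ⟪φ (S X) - S (φ X), ξ⟫ • φ (S ξ)
        - (k * ⟪ξ, ξ⟫) • φ (φ (S X) - S (φ X)))
      - (φ (S (⟪φ (S ξ), X⟫ • ξ - ⟪X, ξ⟫ • φ (S ξ) - (k * ⟪ξ, ξ⟫) • φ X))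
        - S (φ (⟪φ (S ξ), X⟫ • ξ - ⟪X, ξ⟫ • φ (S ξ) - (k * ⟪ξ, ξ⟫) • φ X))) = 0) :
    ∀ X : V, φ (S X) = S (φ X) := by
  have hφSξ : φ (S ξ) = 0 := by rw [hHopf, map_smul, hφξ, smul_zero]
  have hSXξ : ∀ X : V, ⟪S X, ξ⟫ = α * ⟪X, ξ⟫ := fun X => by
    rw [hsym, hHopf, real_inner_smul_right]
  have key : ∀ X : V, φ (S (φ X)) = -(S X) + (α * ⟪X, ξ⟫) • ξ := by
    intro X
    have h := hcomm X
    rw [hφSξ] at h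
    simp only [inner_zero_left, zero_smul, smul_zero, hξ, mul_one, zero_sub, sub_zero,
      zero_add, map_neg, map_smul, map_sub, neg_neg, sub_neg_eq_add] at h
    rw [hφ2 (S X), hφ2 X, map_add, map_neg, map_smul, hHopf, hSXξ] at h
    have h2 : (2*k) • φ (S (φ X)) = (2*k) • (-(S X) + (α * ⟪X, ξ⟫) • ξ) := by
      linear_combination (norm := module) h
    exact smul_right_injective V (by simp [hk]) h2
  intro X
  have h1 := key (φ X)
  rw [hskew, hφξ, inner_zero_right] at h1
  simp only [hφ2, map_add, map_neg, map_smul, hHopf, hφξ, smul_zero, add_zero, neg_zero,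
    mul_zero, zero_smul, neg_inj] at h1
  exact h1
end

section
/- Let V be a real inner product space with an almost contact metric structure (φ, ξ, η) and let S be a symmetric endomorphism of V with Sξ = αξ + βU, where U is a unit vector orthogonal to ξ and β ≠ 0. Then the condition F_ξ^{(k)}(L_ξ X) - L_ξ(F_ξ^{(k)} X) = 0 for all X ∈ V cannot hold, for any nonzero real number k. -/
open RealInnerProductSpace

/-- Non-Hopf case of Theorem 1.1: for a non-Hopf shape operator
(`Sξ = αξ + βU`, `β ≠ 0`) the condition
`F_ξ^{(k)} ∘ L_ξ = L_ξ ∘ F_ξ^{(k)}` cannot hold for any nonzero `k`. -/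
theorem stmt_2 {V : Type*} [NormedAddCommGroup V] [InnerProductSpace ℝ V]
    [FiniteDimensional ℝ V]
    (φ S : V →ₗ[ℝ] V) (ξ U : V) (α β k : ℝ)
    (hφ2 : ∀ X : V, φ (φ X) = -X + ⟪X, ξ⟫ • ξ)
    (hξ : ⟪ξ, ξ⟫ = 1)
    (hmetric : ∀ X Y : V, ⟪φ X, φ Y⟫ = ⟪X, Y⟫ - ⟪X, ξ⟫ * ⟪Y, ξ⟫)
    (hskew : ∀ X Y : V, ⟪φ X, Y⟫ = -⟪X, φ Y⟫)
    (hφξ : φ ξ = 0)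
    (hsym : ∀ X Y : V, ⟪S X, Y⟫ = ⟪X, S Y⟫)
    (hSξ : S ξ = α • ξ + β • U)
    (hUξ : ⟪U, ξ⟫ = 0) (hU : ‖U‖ = 1)
    (hβ : β ≠ 0) (hk : k ≠ 0)
    (hcomm : ∀ X : V,
      (⟪φ (S ξ), φ (S X) - S (φ X)⟫ • ξ
        - ⟪φ (S X) - S (φ X), ξ⟫ • φ (S ξ)
        - (k * ⟪ξ, ξ⟫) • φ (φ (S X) - S (φ X)))
      - (φ (S (⟪φ (S ξ), X⟫ • ξ - ⟪X, ξ⟫ • φ (S ξ) - (k * ⟪ξ, ξ⟫) • φ X))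
        - S (φ (⟪φ (S ξ), X⟫ • ξ - ⟪X, ξ⟫ • φ (S ξ) - (k * ⟪ξ, ξ⟫) • φ X))) = 0) :
    False := by
  have hφSξ : φ (S ξ) = β • φ U := by
    rw [hSξ]; simp [hφξ]
  have hUU : ⟪U, U⟫ = 1 := by
    rw [real_inner_self_eq_norm_sq, hU]; norm_num
  have hφUφU : ⟪φ U, φ U⟫ = 1 := by rw [hmetric, hUξ, hUU]; ring
  have hφUξ : ⟪φ U, ξ⟫ = 0 := by rw [hskew, hφξ, inner_zero_right]; ring
  have hφφU : φ (φ U) = -U := by rw [hφ2, hUξ]; simp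
  have hSφUξ : ⟪φ (S (φ U)), ξ⟫ = 0 := by
    rw [hskew, hφξ, inner_zero_right]; ring
  have hSφφUξ : ⟪S (φ (φ U)), ξ⟫ = -β := by
    rw [hφφU, map_neg, inner_neg_left, hsym, hSξ, inner_add_right,
      inner_smul_right, inner_smul_right, hUξ, hUU]; ring
  have hSUξ : ⟪S U, ξ⟫ = β := by
    rw [hsym, hSξ, inner_add_right, inner_smul_right, inner_smul_right, hUξ, hUU]; ring
  have h := hcomm ξ
  rw [hφSξ, hφξ] at h
  simp only [map_zero, map_add, map_smul, hφξ, smul_zero, add_zero, zero_add,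
    sub_zero, zero_sub, inner_zero_left, smul_neg, neg_neg, mul_one, hξ,
    inner_smul_left, inner_smul_right, hφUξ, hφUφU, mul_zero, zero_smul,
    smul_smul, RCLike.ofReal_real_eq_id, id] at h
  -- take inner product with ξ
  have h2 := congrArg (fun v => ⟪v, ξ⟫) h
  simp only [inner_sub_left, inner_add_left, inner_smul_left, inner_zero_left,
    inner_neg_left, hξ, hφUξ, hUξ, hSφUξ, hSφφUξ, hφφU, hSUξ, starRingEnd_apply, star_trivial, map_neg, map_smul,
    RCLike.ofReal_real_eq_id, id, smul_neg, neg_neg] at h2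
  have : β * β = 0 := by nlinarith [h2]
  exact hβ (by nlinarith [this])
end

section
/- Let V be a real inner product space with almost contact metric structure (φ, ξ, η) and S a symmetric endomorphism with Sξ = αξ. If S²X + φSφSX = 0 for all X orthogonal to ξ, then φS = Sφ. -/
open RealInnerProductSpace

/-- If `S²X + φSφSX = 0` for all `X ⊥ ξ` (Hopf case), then `φS = Sφ`. -/
theorem stmt_3 {V : Type*} [NormedAddCommGroup V] [InnerProductSpace ℝ V]
    [FiniteDimensional ℝ V]
    (φ S : V →ₗ[ℝ] V) (ξ : V) (α : ℝ)
    (hφ2 : ∀ X : V, φ (φ X) = -X + ⟪X, ξ⟫ • ξ)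
    (hξ : ⟪ξ, ξ⟫ = 1)
    (hmetric : ∀ X Y : V, ⟪φ X, φ Y⟫ = ⟪X, Y⟫ - ⟪X, ξ⟫ * ⟪Y, ξ⟫)
    (hskew : ∀ X Y : V, ⟪φ X, Y⟫ = -⟪X, φ Y⟫)
    (hφξ : φ ξ = 0)
    (hsym : ∀ X Y : V, ⟪S X, Y⟫ = ⟪X, S Y⟫)
    (hHopf : S ξ = α • ξ)
    (hmain : ∀ X : V, ⟪X, ξ⟫ = 0 → S (S X) + φ (S (φ (S X))) = 0) :
    ∀ X : V, φ (S X) = S (φ X) := by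
  have key : ∀ X : V, ⟪X, ξ⟫ = 0 → φ (S X) = S (φ X) := by
    intro X hX
    have hSXξ : ⟪S X, ξ⟫ = 0 := by
      rw [hsym, hHopf, real_inner_smul_right, hX, mul_zero]
    have hφXξ : ⟪φ X, ξ⟫ = 0 := by
      rw [hskew X ξ, hφξ, inner_zero_right, neg_zero]
    have h1 : S (S X) = -φ (S (φ (S X))) :=
      eq_neg_of_add_eq_zero_left (hmain X hX)
    have h2 : S (S (φ X)) = -φ (S (φ (S (φ X)))) :=
      eq_neg_of_add_eq_zero_left (hmain (φ X) hφXξ)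
    -- a = b
    have ha : ⟪φ (S X), φ (S X)⟫ = ⟪S (φ X), φ (S X)⟫ := by
      calc ⟪φ (S X), φ (S X)⟫ = ⟪S X, S X⟫ - ⟪S X, ξ⟫ * ⟪S X, ξ⟫ := hmetric _ _
        _ = ⟪X, S (S X)⟫ := by rw [hSXξ, hsym]; ring
        _ = -⟪X, φ (S (φ (S X)))⟫ := by rw [h1, inner_neg_right]
        _ = ⟪φ X, S (φ (S X))⟫ := by rw [hskew]
        _ = ⟪S (φ X), φ (S X)⟫ := (hsym _ _).symm
    -- c = b'
    have hc : ⟪S (φ X), S (φ X)⟫ = ⟪φ (S X), S (φ X)⟫ := by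
      calc ⟪S (φ X), S (φ X)⟫ = ⟪φ X, S (S (φ X))⟫ := hsym _ _
        _ = -⟪φ X, φ (S (φ (S (φ X))))⟫ := by rw [h2, inner_neg_right]
        _ = -(⟪X, S (φ (S (φ X)))⟫ - ⟪X, ξ⟫ * ⟪S (φ (S (φ X))), ξ⟫) := by
            rw [hmetric]
        _ = -⟪S X, φ (S (φ X))⟫ := by rw [hX, ← hsym]; ring
        _ = ⟪φ (S X), S (φ X)⟫ := (hskew _ _).symm
    have hz : ⟪φ (S X) - S (φ X), φ (S X) - S (φ X)⟫ = 0 := by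
      rw [inner_sub_left, inner_sub_right, inner_sub_right,
        real_inner_comm (S (φ X)) (φ (S X))] at *
      linarith
    have := inner_self_eq_zero.mp hz
    exact sub_eq_zero.mp this
  intro X
  have hdec : X = (X - ⟪X, ξ⟫ • ξ) + ⟪X, ξ⟫ • ξ := by abel
  have hC : ⟪X - ⟪X, ξ⟫ • ξ, ξ⟫ = 0 := by
    rw [inner_sub_left, real_inner_smul_left, hξ]; ring
  calc φ (S X) = φ (S ((X - ⟪X, ξ⟫ • ξ) + ⟪X, ξ⟫ • ξ)) := by rw [← hdec]
    _ = φ (S (X - ⟪X, ξ⟫ • ξ)) + ⟪X, ξ⟫ • φ (S ξ) := by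
        rw [map_add, map_smul, map_add, map_smul]
    _ = S (φ (X - ⟪X, ξ⟫ • ξ)) + ⟪X, ξ⟫ • S (φ ξ) := by
        rw [key _ hC, hHopf, map_smul, hφξ]; simp
    _ = S (φ ((X - ⟪X, ξ⟫ • ξ) + ⟪X, ξ⟫ • ξ)) := by
        rw [map_add, map_smul, map_add, map_smul]
    _ = S (φ X) := by rw [← hdec]
end

section
/- Let V be a real inner product space with almost contact metric structure (φ, ξ, η) and S a symmetric endomorphism with Sξ = αξ. Fix a nonzero real k. If (φS - Sφ)φSX = k(φS - Sφ)φX for all X orthogonal to ξ, then φS = Sφ. -/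
open RealInnerProductSpace

/-- If `(φS - Sφ)φSX = k (φS - Sφ)φX` for all `X ⊥ ξ` (Hopf case, `k ≠ 0`),
then `φS = Sφ`. -/
theorem stmt_4 {V : Type*} [NormedAddCommGroup V] [InnerProductSpace ℝ V]
    [FiniteDimensional ℝ V]
    (φ S : V →ₗ[ℝ] V) (ξ : V) (α k : ℝ)
    (hφ2 : ∀ X : V, φ (φ X) = -X + ⟪X, ξ⟫ • ξ)
    (hξ : ⟪ξ, ξ⟫ = 1)
    (hmetric : ∀ X Y : V, ⟪φ X, φ Y⟫ = ⟪X, Y⟫ - ⟪X, ξ⟫ * ⟪Y, ξ⟫)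
    (hskew : ∀ X Y : V, ⟪φ X, Y⟫ = -⟪X, φ Y⟫)
    (hφξ : φ ξ = 0)
    (hsym : ∀ X Y : V, ⟪S X, Y⟫ = ⟪X, S Y⟫)
    (hHopf : S ξ = α • ξ)
    (hk : k ≠ 0)
    (hmain : ∀ X : V, ⟪X, ξ⟫ = 0 →
      φ (S (φ (S X))) - S (φ (φ (S X))) = k • (φ (S (φ X)) - S (φ (φ X)))) :
    ∀ X : V, φ (S X) = S (φ X) := by
  -- φ X is always orthogonal to ξ
  have hφC : ∀ X : V, ⟪φ X, ξ⟫ = 0 := by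
    intro X; rw [hskew, hφξ, inner_zero_right]; ring
  -- S preserves C
  have hSC : ∀ X : V, ⟪X, ξ⟫ = 0 → ⟪S X, ξ⟫ = 0 := by
    intro X hX; rw [hsym, hHopf, real_inner_smul_right, hX]; ring
  set B : V →ₗ[ℝ] V := φ ∘ₗ S ∘ₗ φ + S with hBdef
  have hBapp : ∀ X : V, B X = φ (S (φ X)) + S X := fun X => rfl
  -- B maps into C
  have hBξ : ∀ X : V, ⟪X, ξ⟫ = 0 → ⟪B X, ξ⟫ = 0 := by
    intro X hX
    rw [hBapp, inner_add_left, hφC, hSC X hX]; ring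
  -- symmetry of φSφ and of B
  have hT : ∀ X Y : V, ⟪φ (S (φ X)), Y⟫ = ⟪X, φ (S (φ Y))⟫ := by
    intro X Y
    rw [hskew, hsym, hskew, neg_neg]
  have hBsym : ∀ X Y : V, ⟪B X, Y⟫ = ⟪X, B Y⟫ := by
    intro X Y
    rw [hBapp, hBapp, inner_add_left, inner_add_right, hT, hsym]
  -- the main hypothesis rewritten: B (S X) = k • B X on C
  have hBS : ∀ X : V, ⟪X, ξ⟫ = 0 → B (S X) = k • B X := by
    intro X hX
    have h := hmain X hX
    rw [hφ2 (S X), hφ2 X, hX, hSC X hX, zero_smul, add_zero, add_zero, map_neg,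
      map_neg, sub_neg_eq_add, sub_neg_eq_add, smul_add] at h
    rw [hBapp, hBapp, smul_add]
    exact h
  -- φ B φ = B on C
  have hφBφ : ∀ X : V, ⟪X, ξ⟫ = 0 → φ (B (φ X)) = B X := by
    intro X hX
    rw [hBapp (φ X), hφ2 X, hX, zero_smul, add_zero, map_neg, map_neg, map_add,
      map_neg, hφ2 (S X), hSC X hX, zero_smul, add_zero, hBapp]
    abel
  -- B anticommutes with φ on C
  have hanti : ∀ X : V, ⟪X, ξ⟫ = 0 → φ (B X) = -B (φ X) := by
    intro X hX
    have h := hφBφ (φ X) (hφC X)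
    rw [hφ2 X, hX, zero_smul, add_zero, map_neg, map_neg] at h
    rw [← h, neg_neg]
  -- S B = k B on C
  have hSB : ∀ X : V, ⟪X, ξ⟫ = 0 → S (B X) = k • B X := by
    intro X hX
    set W : V := S (B X) - k • B X with hW
    have hWξ : ⟪W, ξ⟫ = 0 := by
      rw [hW, inner_sub_left, real_inner_smul_left, hSC _ (hBξ X hX), hBξ X hX]
      ring
    have hWW : ⟪W, W⟫ = 0 := by
      have h1 : ⟪S (B X), W⟫ = k * ⟪B X, W⟫ := by
        rw [hsym, hBsym, hBS W hWξ, real_inner_smul_right, hBsym]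
      rw [hW, inner_sub_left, real_inner_smul_left, h1]
      ring
    have := inner_self_eq_zero.mp hWW
    rw [hW, sub_eq_zero] at this
    exact this
  -- B ∘ B = 0 on C, hence B = 0 on C
  have hB0 : ∀ X : V, ⟪X, ξ⟫ = 0 → B X = 0 := by
    intro X hX
    have hBB : B (B X) = 0 := by
      rw [hBapp (B X), hanti X hX, map_neg, hSB (φ X) (hφC X), map_neg, map_smul,
        hφBφ X hX, hSB X hX]
      abel
    have : ⟪B X, B X⟫ = 0 := by rw [hBsym, hBB, inner_zero_right]
    exact inner_self_eq_zero.mp this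
  -- conclude
  intro X
  set c : ℝ := ⟪X, ξ⟫ with hc
  set Xc : V := X - c • ξ with hXc
  have hXcC : ⟪Xc, ξ⟫ = 0 := by
    rw [hXc, inner_sub_left, real_inner_smul_left, hξ, ← hc]; ring
  have key : φ (S (φ Xc)) = -S Xc := by
    have h := hB0 Xc hXcC
    rw [hBapp] at h
    exact eq_neg_of_add_eq_zero_left h
  have comm : φ (S Xc) = S (φ Xc) := by
    have h := congrArg φ key
    rw [map_neg, hφ2 (S (φ Xc)), hSC (φ Xc) (hφC Xc), zero_smul, add_zero] at h
    rw [← neg_neg (φ (S Xc)), ← h, neg_neg]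
  have hXdecomp : X = Xc + c • ξ := by rw [hXc]; abel
  rw [hXdecomp]
  simp [map_add, map_smul, hHopf, hφξ, comm]
end

section
/- Let V be a real inner product space with almost contact metric structure (φ, ξ, η), S symmetric with Sξ = αξ + βU where U ⊥ ξ is a unit vector and β ≠ 0, and k ≠ 0 real. Suppose SU = βξ + kU, SφU = -kφU, and SφY = -φSY for all Y orthogonal to ξ, U, and φU. Then the identity -βφSX + kβφX = 0 for all X orthogonal to ξ, U, φU leads to a contradiction (i.e., such S cannot exist when dim V ≥ 5). -/
open RealInnerProductSpace

/-- Non-Hopf case of Theorem 1.3 (final contradiction): with `SU = βξ + kU`,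
`SφU = -kφU`, anti-commutation on `C_U`, and `-βφSX + kβφX = 0` on `C_U`,
we reach a contradiction when `dim V ≥ 5`. -/
theorem stmt_5 {V : Type*} [NormedAddCommGroup V] [InnerProductSpace ℝ V]
    [FiniteDimensional ℝ V]
    (φ S : V →ₗ[ℝ] V) (ξ U : V) (α β k : ℝ)
    (hdim : 5 ≤ Module.finrank ℝ V)
    (hφ2 : ∀ X : V, φ (φ X) = -X + ⟪X, ξ⟫ • ξ)
    (hξ : ⟪ξ, ξ⟫ = 1)
    (hmetric : ∀ X Y : V, ⟪φ X, φ Y⟫ = ⟪X, Y⟫ - ⟪X, ξ⟫ * ⟪Y, ξ⟫)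
    (hskew : ∀ X Y : V, ⟪φ X, Y⟫ = -⟪X, φ Y⟫)
    (hφξ : φ ξ = 0)
    (hsym : ∀ X Y : V, ⟪S X, Y⟫ = ⟪X, S Y⟫)
    (hSξ : S ξ = α • ξ + β • U)
    (hUξ : ⟪U, ξ⟫ = 0) (hU : ‖U‖ = 1)
    (hβ : β ≠ 0) (hk : k ≠ 0)
    (hSU : S U = β • ξ + k • U)
    (hSφU : S (φ U) = -k • φ U)
    (hanti : ∀ Y : V, ⟪Y, ξ⟫ = 0 → ⟪Y, U⟫ = 0 → ⟪Y, φ U⟫ = 0 →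
      S (φ Y) + φ (S Y) = 0)
    (hmain : ∀ X : V, ⟪X, ξ⟫ = 0 → ⟪X, U⟫ = 0 → ⟪X, φ U⟫ = 0 →
      -β • φ (S X) + (k * β) • φ X = 0) :
    False := by
  classical
  -- Find a nonzero X orthogonal to ξ, U, φ U
  set W : Submodule ℝ V := Submodule.span ℝ {ξ, U, φ U} with hW
  have hWfin : Module.finrank ℝ W ≤ 3 := by
    refine (finrank_span_le_card _).trans ?_
    simp only [Set.toFinset_insert, Set.toFinset_singleton]
    refine (Finset.card_insert_le _ _).trans ?_
    exact Nat.succ_le_succ ((Finset.card_insert_le _ _).trans (by simp))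
  have hWo : Wᗮ ≠ ⊥ := by
    intro h
    have := Submodule.finrank_add_finrank_orthogonal (K := W)
    rw [h, finrank_bot] at this
    omega
  obtain ⟨X, hXW, hX0⟩ := Submodule.exists_mem_ne_zero_of_ne_bot hWo
  have hmem : ∀ v : V, v ∈ W → ⟪X, v⟫ = 0 := by
    intro v hv
    have := (Submodule.mem_orthogonal W X).mp hXW v hv
    rwa [real_inner_comm] at this
  have hξmem : ξ ∈ W := Submodule.subset_span (by simp)
  have hUmem : U ∈ W := Submodule.subset_span (by simp)
  have hφUmem : φ U ∈ W := Submodule.subset_span (by simp)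
  have h1 : ⟪X, ξ⟫ = 0 := hmem _ hξmem
  have h2 : ⟪X, U⟫ = 0 := hmem _ hUmem
  have h3 : ⟪X, φ U⟫ = 0 := hmem _ hφUmem
  -- φ X is also in C_U
  have hp1 : ⟪φ X, ξ⟫ = 0 := by rw [hskew, hφξ, inner_zero_right]; ring
  have hp2 : ⟪φ X, U⟫ = 0 := by
    rw [hskew]
    simp [h3]
  have hp3 : ⟪φ X, φ U⟫ = 0 := by rw [hmetric, h1, h2]; ring
  -- SX = kX for X in C_U (key lemma applied twice)
  have key : ∀ Y : V, ⟪Y, ξ⟫ = 0 → ⟪Y, U⟫ = 0 → ⟪Y, φ U⟫ = 0 → S Y = k • Y := by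
    intro Y hy1 hy2 hy3
    have hm := hmain Y hy1 hy2 hy3
    have hdiff : β • (φ (S Y) - k • φ Y) = 0 := by
      linear_combination (norm := module) -hm
    have : φ (S Y) = k • φ Y := by
      have h := (smul_eq_zero.mp hdiff).resolve_left hβ
      exact sub_eq_zero.mp h

    have hSYξ : ⟪S Y, ξ⟫ = 0 := by
      rw [hsym Y ξ, hSξ, inner_add_right, real_inner_smul_right, real_inner_smul_right,
        hy1, hy2]
      ring
    have := congrArg φ this
    rw [hφ2, map_smul, hφ2] at this
    rw [hSYξ, hy1] at this
    simp only [zero_smul, add_zero, smul_neg] at this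
    have := neg_injective this
    exact this
  have hSX : S X = k • X := key X h1 h2 h3
  have hSφX : S (φ X) = k • φ X := key (φ X) hp1 hp2 hp3
  have ha := hanti X h1 h2 h3
  rw [hSφX, hSX, map_smul] at ha
  have h2k : (2 * k) • φ X = 0 := by linear_combination (norm := module) ha
  have hφX : φ X = 0 := by
    have : (2 * k) ≠ 0 := by positivity
    exact (smul_eq_zero.mp h2k).resolve_left this
  have := hφ2 X
  rw [hφX, map_zero, h1, zero_smul, add_zero] at this
  exact hX0 (neg_eq_zero.mp this.symm)
end

section
/- Let V be a real inner product space with almost contact metric structure (φ, ξ, η) and S symmetric with Sξ = αξ + βU, U ⊥ ξ unit, β ≠ 0. Define T_X^{(k)}Y = F_X^{(k)}Y - F_Y^{(k)}X with F_X^{(k)}Y = ⟨φSX,Y⟩ξ - η(Y)φSX - kη(X)φY, and L_ξ = φS - Sφ. Then the condition T_ξ^{(k)}(L_ξ X) - L_ξ(T_ξ^{(k)}X) = 0 for all X ∈ V fails for every nonzero real k. -/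
open RealInnerProductSpace

/-- Theorem 1.4: no non-Hopf shape operator satisfies
`T_ξ^{(k)} ∘ L_ξ = L_ξ ∘ T_ξ^{(k)}` for a nonzero `k`. -/
theorem stmt_6 {V : Type*} [NormedAddCommGroup V] [InnerProductSpace ℝ V]
    [FiniteDimensional ℝ V]
    (φ S : V →ₗ[ℝ] V) (ξ U : V) (α β k : ℝ)
    (hφ2 : ∀ X : V, φ (φ X) = -X + ⟪X, ξ⟫ • ξ)
    (hξ : ⟪ξ, ξ⟫ = 1)
    (hmetric : ∀ X Y : V, ⟪φ X, φ Y⟫ = ⟪X, Y⟫ - ⟪X, ξ⟫ * ⟪Y, ξ⟫)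
    (hskew : ∀ X Y : V, ⟪φ X, Y⟫ = -⟪X, φ Y⟫)
    (hφξ : φ ξ = 0)
    (hsym : ∀ X Y : V, ⟪S X, Y⟫ = ⟪X, S Y⟫)
    (hSξ : S ξ = α • ξ + β • U)
    (hUξ : ⟪U, ξ⟫ = 0) (hU : ‖U‖ = 1)
    (hβ : β ≠ 0) (hk : k ≠ 0)
    (hcomm : ∀ X : V,
      -- T_ξ^{(k)} (L_ξ X) - L_ξ (T_ξ^{(k)} X) = 0, where
      -- F_X^{(k)} Y = ⟪φSX, Y⟫ ξ - ⟪Y, ξ⟫ φSX - k ⟪X, ξ⟫ φY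
      -- T_X^{(k)} Y = F_X^{(k)} Y - F_Y^{(k)} X, L_ξ = φS - Sφ
      ((⟪φ (S ξ), φ (S X) - S (φ X)⟫ • ξ
          - ⟪φ (S X) - S (φ X), ξ⟫ • φ (S ξ)
          - (k * ⟪ξ, ξ⟫) • φ (φ (S X) - S (φ X)))
        - (⟪φ (S (φ (S X) - S (φ X))), ξ⟫ • ξ
          - ⟪ξ, ξ⟫ • φ (S (φ (S X) - S (φ X)))
          - (k * ⟪φ (S X) - S (φ X), ξ⟫) • φ ξ))
      - (φ (S ((⟪φ (S ξ), X⟫ • ξ - ⟪X, ξ⟫ • φ (S ξ) - (k * ⟪ξ, ξ⟫) • φ X)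
            - (⟪φ (S X), ξ⟫ • ξ - ⟪ξ, ξ⟫ • φ (S X) - (k * ⟪X, ξ⟫) • φ ξ)))
        - S (φ ((⟪φ (S ξ), X⟫ • ξ - ⟪X, ξ⟫ • φ (S ξ) - (k * ⟪ξ, ξ⟫) • φ X)
            - (⟪φ (S X), ξ⟫ • ξ - ⟪ξ, ξ⟫ • φ (S X) - (k * ⟪X, ξ⟫) • φ ξ)))) = 0) :
    False := by
  have hUU : ⟪U, U⟫ = 1 := by
    have := real_inner_self_eq_norm_sq U
    rw [hU] at this; simpa using this
  have hφUξ : ⟪φ U, ξ⟫ = 0 := by rw [hskew, hφξ, inner_zero_right, neg_zero]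
  have hξφU : ⟪ξ, φ U⟫ = 0 := by rw [← neg_eq_zero, ← hskew, hφξ, inner_zero_left]
  have hφU2 : φ (φ U) = -U := by rw [hφ2, hUξ]; simp
  have hφUφU : ⟪φ U, φ U⟫ = (1:ℝ) := by rw [hmetric, hUU, hUξ]; ring
  have hSφUξ : ⟪φ (S (φ U)), ξ⟫ = 0 := by
    rw [hskew, hφξ, inner_zero_right, neg_zero]
  have h := hcomm ξ
  rw [hφξ, hSξ] at h
  simp only [map_add, map_smul, map_zero, smul_zero, sub_zero, zero_sub,
    inner_zero_right, inner_zero_left, zero_smul, smul_neg, neg_neg, hξ,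
    inner_add_left, inner_add_right, inner_smul_left, inner_smul_right,
    RCLike.star_def, starRingEnd_apply, star_trivial, hUξ, mul_zero, mul_one,
    add_zero, zero_add, one_smul, neg_zero, sub_self, hφξ, hφUξ, hξφU, hφU2, hφUφU, hSφUξ] at h
  have h2 := congrArg (fun v => ⟪v, ξ⟫) h
  simp only [inner_add_left, inner_sub_left, inner_smul_left, inner_zero_left,
    RCLike.star_def, starRingEnd_apply, star_trivial, hξ, hUξ, hφUξ, hSφUξ,
    inner_neg_left, mul_one, mul_zero] at h2
  have : β * β = 0 := by linarith
  exact hβ (by nlinarith)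
end

section
/- Let V be a real inner product space with almost contact metric structure (φ, ξ, η), S symmetric with Sξ = αξ + βU, U ⊥ ξ unit, β ≠ 0. Suppose that for all X ⊥ ξ and all Y ∈ V: ⟨φSX, φSY⟩ξ - ⟨φSX, SφY⟩ξ - β⟨Y, φU⟩SφX - β⟨φSX, Y⟩φU + η(Y)(φS - Sφ)φSX = 0. Then SU = βξ, SφU = 0, and SX = 0 for all X orthogonal to ξ, U, and φU (i.e., the shape operator has the form of a ruled real hypersurface). -/
/-!
Pairing the condition with `φU` shows that for `X ⊥ ξ` the vector `φSX` is `-⟨SφX, φU⟩ φU`.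
Since `φ` is injective on `ξ^⊥` and `⟨SX, ξ⟩ = β⟨X, U⟩` by symmetry of `S`, this puts `SX` in
`span {ξ, U}`. Hence `SU = βξ + cU` and `SφU = 0`; the `ξ`-component of the condition at
`X = U`, `Y = ξ` is `2cβ`, so `c = 0`, and then `SX = ⟨X, SU⟩ U = 0` whenever `X ⊥ ξ, U`.
-/

open RealInnerProductSpace

section

variable {V : Type*} [NormedAddCommGroup V] [InnerProductSpace ℝ V]

structure IsAlmostContactMetric (φ : V →ₗ[ℝ] V) (ξ : V) : Prop where
  map_map : ∀ X, φ (φ X) = -X + ⟪X, ξ⟫ • ξ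
  inner_xi_xi : ⟪ξ, ξ⟫ = 1
  inner_map_left : ∀ X Y, ⟪φ X, Y⟫ = -⟪X, φ Y⟫
  map_xi : φ ξ = 0

namespace IsAlmostContactMetric

variable {φ : V →ₗ[ℝ] V} {ξ : V}

theorem inner_map_xi (h : IsAlmostContactMetric φ ξ) (W : V) : ⟪φ W, ξ⟫ = 0 := by
  rw [h.inner_map_left, h.map_xi, inner_zero_right, neg_zero]

theorem inner_map_self (h : IsAlmostContactMetric φ ξ) (X : V) : ⟪φ X, X⟫ = 0 := by
  have := h.inner_map_left X X
  rw [real_inner_comm (φ X)] at this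
  linarith

theorem inner_map_map (h : IsAlmostContactMetric φ ξ) (X Y : V) :
    ⟪φ X, φ Y⟫ = ⟪X, Y⟫ - ⟪X, ξ⟫ * ⟪Y, ξ⟫ := by
  rw [h.inner_map_left, h.map_map, inner_add_right, inner_neg_right, real_inner_smul_right]
  ring

theorem eq_of_map_eq (h : IsAlmostContactMetric φ ξ) {A B : V} (hφ : φ A = φ B)
    (hξ : ⟪A, ξ⟫ = ⟪B, ξ⟫) : A = B := by
  have hA := h.map_map A
  rw [hφ, h.map_map, hξ] at hA
  simpa using hA.symm

end IsAlmostContactMetric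

/-- The pointwise form of `L_{ξ_F}^{(k)}(X, Y)`, where `S ξ = α ξ + β U`. -/
def reebLieTerm (φ S : V →ₗ[ℝ] V) (ξ U : V) (β : ℝ) (X Y : V) : V :=
  ⟪φ (S X), φ (S Y)⟫ • ξ - ⟪φ (S X), S (φ Y)⟫ • ξ
    - (β * ⟪Y, φ U⟫) • S (φ X) - (β * ⟪φ (S X), Y⟫) • φ U
    + ⟪Y, ξ⟫ • (φ (S (φ (S X))) - S (φ (φ (S X))))

variable {φ S : V →ₗ[ℝ] V} {ξ U : V} {α β : ℝ}

theorem inner_reebLieTerm_map_U (h : IsAlmostContactMetric φ ξ) (hUξ : ⟪U, ξ⟫ = 0)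
    (hUU : ⟪U, U⟫ = 1) (X : V) {Y : V} (hY : ⟪Y, ξ⟫ = 0) :
    ⟪reebLieTerm φ S ξ U β X Y, φ U⟫
      = -β * (⟪Y, φ U⟫ * ⟪S (φ X), φ U⟫ + ⟪φ (S X), Y⟫) := by
  have hξφU : ⟪ξ, φ U⟫ = 0 := by rw [real_inner_comm]; exact h.inner_map_xi U
  have hφUφU : ⟪φ U, φ U⟫ = 1 := by rw [h.inner_map_map, hUξ, hUU]; ring
  simp only [reebLieTerm, inner_add_left, inner_sub_left, real_inner_smul_left, hξφU, hY,
    hφUφU]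
  ring

theorem map_apply_eq_of_reebLieTerm_eq_zero (h : IsAlmostContactMetric φ ξ)
    (hUξ : ⟪U, ξ⟫ = 0) (hUU : ⟪U, U⟫ = 1) (hβ : β ≠ 0) (X : V)
    (hL : ∀ Y, ⟪Y, ξ⟫ = 0 → reebLieTerm φ S ξ U β X Y = 0) :
    φ (S X) = -⟪S (φ X), φ U⟫ • φ U := by
  set c := ⟪S (φ X), φ U⟫
  set v := φ (S X) + c • φ U
  have hvξ : ⟪v, ξ⟫ = 0 := by
    rw [inner_add_left, real_inner_smul_left, h.inner_map_xi, h.inner_map_xi, mul_zero, add_zero]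
  have hv : ⟪v, v⟫ = 0 := by
    have hpair := inner_reebLieTerm_map_U (S := S) (β := β) h hUξ hUU X hvξ
    rw [hL v hvξ, inner_zero_left, eq_comm, mul_eq_zero, neg_eq_zero] at hpair
    have hφSX : ⟪φ (S X), v⟫ = -(⟪v, φ U⟫ * c) := by linarith [hpair.resolve_left hβ]
    rw [inner_add_left, real_inner_smul_left, hφSX, real_inner_comm v]
    ring
  rw [neg_smul, eq_neg_iff_add_eq_zero]
  exact inner_self_eq_zero.mp hv

theorem apply_eq_of_reebLieTerm_eq_zero (h : IsAlmostContactMetric φ ξ) (hS : S.IsSymmetric)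
    (hSξ : S ξ = α • ξ + β • U) (hUξ : ⟪U, ξ⟫ = 0) (hUU : ⟪U, U⟫ = 1) (hβ : β ≠ 0) {X : V}
    (hX : ⟪X, ξ⟫ = 0) (hL : ∀ Y, ⟪Y, ξ⟫ = 0 → reebLieTerm φ S ξ U β X Y = 0) :
    S X = (β * ⟪X, U⟫) • ξ + ⟪S X, U⟫ • U := by
  set c := ⟪S (φ X), φ U⟫
  have hSX : S X = (β * ⟪X, U⟫) • ξ + (-c) • U := by
    refine h.eq_of_map_eq ?_ ?_
    · rw [map_apply_eq_of_reebLieTerm_eq_zero h hUξ hUU hβ X hL, map_add, map_smul, map_smul,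
        h.map_xi, smul_zero, zero_add]
    · rw [hS, hSξ, inner_add_left, inner_add_right, real_inner_smul_left, real_inner_smul_left,
        real_inner_smul_right, real_inner_smul_right, h.inner_xi_xi, hUξ, hX]
      ring
  have hSXU : ⟪S X, U⟫ = -c := by
    rw [hSX, inner_add_left, real_inner_smul_left, real_inner_smul_left, real_inner_comm U ξ, hUξ,
      hUU]
    ring
  rw [hSXU]
  exact hSX

theorem inner_reebLieTerm_U_xi_xi (h : IsAlmostContactMetric φ ξ) (hSξ : S ξ = α • ξ + β • U)
    (hUξ : ⟪U, ξ⟫ = 0) (hUU : ⟪U, U⟫ = 1) {c : ℝ} (hSU : S U = β • ξ + c • U)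
    (hSφU : S (φ U) = 0) :
    ⟪reebLieTerm φ S ξ U β U ξ, ξ⟫ = 2 * c * β := by
  have hφSU : φ (S U) = c • φ U := by
    rw [hSU, map_add, map_smul, map_smul, h.map_xi, smul_zero, zero_add]
  have hφSξ : φ (S ξ) = β • φ U := by
    rw [hSξ, map_add, map_smul, map_smul, h.map_xi, smul_zero, zero_add]
  have hφφU : φ (φ U) = -U := by rw [h.map_map, hUξ, zero_smul, add_zero]
  have hφUφU : ⟪φ U, φ U⟫ = 1 := by rw [h.inner_map_map, hUξ, hUU]; ring
  simp only [reebLieTerm, hφSU, hφSξ, h.map_xi, map_zero, inner_zero_right, zero_smul,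
    map_smul, hSφU, smul_zero, hφφU, map_neg]
  simp only [hSU, h.inner_xi_xi, inner_add_left, inner_sub_left, inner_neg_left, inner_zero_left,
    real_inner_smul_left, real_inner_smul_right, h.inner_map_xi, hUξ, hφUφU]
  ring

end

theorem stmt_8_general {V : Type*} [NormedAddCommGroup V] [InnerProductSpace ℝ V]
    (φ S : V →ₗ[ℝ] V) (ξ U : V) (α β : ℝ)
    (hφ2 : ∀ X : V, φ (φ X) = -X + ⟪X, ξ⟫ • ξ)
    (hξ : ⟪ξ, ξ⟫ = 1)
    (hskew : ∀ X Y : V, ⟪φ X, Y⟫ = -⟪X, φ Y⟫)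
    (hφξ : φ ξ = 0)
    (hsym : ∀ X Y : V, ⟪S X, Y⟫ = ⟪X, S Y⟫)
    (hSξ : S ξ = α • ξ + β • U)
    (hUξ : ⟪U, ξ⟫ = 0) (hU : ‖U‖ = 1)
    (hβ : β ≠ 0)
    (hmain : ∀ X Y : V, ⟪X, ξ⟫ = 0 →
      ⟪φ (S X), φ (S Y)⟫ • ξ - ⟪φ (S X), S (φ Y)⟫ • ξ
        - (β * ⟪Y, φ U⟫) • S (φ X) - (β * ⟪φ (S X), Y⟫) • φ U
        + ⟪Y, ξ⟫ • (φ (S (φ (S X))) - S (φ (φ (S X)))) = 0) :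
    S U = β • ξ ∧ S (φ U) = 0 ∧
      ∀ X : V, ⟪X, ξ⟫ = 0 → ⟪X, U⟫ = 0 → ⟪X, φ U⟫ = 0 → S X = 0 := by
  have hacm : IsAlmostContactMetric φ ξ := ⟨hφ2, hξ, hskew, hφξ⟩
  have hUU : ⟪U, U⟫ = 1 := by rw [real_inner_self_eq_norm_sq, hU, one_pow]
  have hrep {X : V} (hX : ⟪X, ξ⟫ = 0) : S X = (β * ⟪X, U⟫) • ξ + ⟪S X, U⟫ • U :=
    apply_eq_of_reebLieTerm_eq_zero hacm hsym hSξ hUξ hUU hβ hX fun Y _ => hmain X Y hX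
  set c := ⟪S U, U⟫
  have hSU : S U = β • ξ + c • U := by simpa only [hUU, mul_one] using hrep hUξ
  have hSφU : S (φ U) = 0 := by
    have hφUU := hacm.inner_map_self U
    have hSφUU : ⟪S (φ U), U⟫ = 0 := by
      rw [hsym, hSU, inner_add_right, real_inner_smul_right, real_inner_smul_right,
        hacm.inner_map_xi, hφUU, mul_zero, mul_zero, add_zero]
    simpa [hφUU, hSφUU] using hrep (hacm.inner_map_xi U)
  have hc : c = 0 := by
    have h2cβ := inner_reebLieTerm_U_xi_xi hacm hSξ hUξ hUU hSU hSφU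
    rw [show reebLieTerm φ S ξ U β U ξ = 0 from hmain U ξ hUξ, inner_zero_left] at h2cβ
    simpa [hβ] using h2cβ.symm
  rw [hc, zero_smul, add_zero] at hSU
  refine ⟨hSU, hSφU, fun X hXξ hXU _ => ?_⟩
  have hSXU : ⟪S X, U⟫ = 0 := by rw [hsym, hSU, real_inner_smul_right, hXξ, mul_zero]
  simpa [hXU, hSXU] using hrep hXξ

/-- Non-Hopf case of Theorem 1.2: the condition `L_{ξ_F}^{(k)}(X,Y) = 0` for
`X ∈ C` forces the shape operator to be of ruled type:
`SU = βξ`, `SφU = 0` and `SX = 0` on `C_U`. -/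
theorem stmt_8 {V : Type*} [NormedAddCommGroup V] [InnerProductSpace ℝ V]
    [FiniteDimensional ℝ V]
    (φ S : V →ₗ[ℝ] V) (ξ U : V) (α β : ℝ)
    (hφ2 : ∀ X : V, φ (φ X) = -X + ⟪X, ξ⟫ • ξ)
    (hξ : ⟪ξ, ξ⟫ = 1)
    (hmetric : ∀ X Y : V, ⟪φ X, φ Y⟫ = ⟪X, Y⟫ - ⟪X, ξ⟫ * ⟪Y, ξ⟫)
    (hskew : ∀ X Y : V, ⟪φ X, Y⟫ = -⟪X, φ Y⟫)
    (hφξ : φ ξ = 0)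
    (hsym : ∀ X Y : V, ⟪S X, Y⟫ = ⟪X, S Y⟫)
    (hSξ : S ξ = α • ξ + β • U)
    (hUξ : ⟪U, ξ⟫ = 0) (hU : ‖U‖ = 1)
    (hβ : β ≠ 0)
    (hmain : ∀ X Y : V, ⟪X, ξ⟫ = 0 →
      ⟪φ (S X), φ (S Y)⟫ • ξ - ⟪φ (S X), S (φ Y)⟫ • ξ
        - (β * ⟪Y, φ U⟫) • S (φ X) - (β * ⟪φ (S X), Y⟫) • φ U
        + ⟪Y, ξ⟫ • (φ (S (φ (S X))) - S (φ (φ (S X)))) = 0) :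
    S U = β • ξ ∧ S (φ U) = 0 ∧
      ∀ X : V, ⟪X, ξ⟫ = 0 → ⟪X, U⟫ = 0 → ⟪X, φ U⟫ = 0 → S X = 0 :=
  stmt_8_general φ S ξ U α β hφ2 hξ hskew hφξ hsym hSξ hUξ hU hβ hmain
end

section
/- Let V be a real inner product space with almost contact metric structure (φ, ξ, η) and S symmetric with Sξ = αξ. Suppose that for all X, Y orthogonal to ξ: ⟨S²X + φSφSX, Y⟩ = 0. Then every eigenspace of S restricted to ξ^⊥ corresponding to a nonzero eigenvalue is φ-invariant. -/
open RealInnerProductSpace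

/-- If `⟪S²X + φSφSX, Y⟫ = 0` for all `X, Y ⊥ ξ` (Hopf case), then every
eigenspace of `S` on `ξ^⊥` for a nonzero eigenvalue is `φ`-invariant. -/
theorem stmt_9 {V : Type*} [NormedAddCommGroup V] [InnerProductSpace ℝ V]
    [FiniteDimensional ℝ V]
    (φ S : V →ₗ[ℝ] V) (ξ : V) (α : ℝ)
    (hφ2 : ∀ X : V, φ (φ X) = -X + ⟪X, ξ⟫ • ξ)
    (hξ : ⟪ξ, ξ⟫ = 1)
    (hmetric : ∀ X Y : V, ⟪φ X, φ Y⟫ = ⟪X, Y⟫ - ⟪X, ξ⟫ * ⟪Y, ξ⟫)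
    (hskew : ∀ X Y : V, ⟪φ X, Y⟫ = -⟪X, φ Y⟫)
    (hφξ : φ ξ = 0)
    (hsym : ∀ X Y : V, ⟪S X, Y⟫ = ⟪X, S Y⟫)
    (hHopf : S ξ = α • ξ)
    (hmain : ∀ X Y : V, ⟪X, ξ⟫ = 0 → ⟪Y, ξ⟫ = 0 →
      ⟪S (S X) + φ (S (φ (S X))), Y⟫ = 0) :
    ∀ X : V, ⟪X, ξ⟫ = 0 → ∀ lam : ℝ, lam ≠ 0 → S X = lam • X →
      S (φ X) = lam • φ X := by
  intro X hXξ lam hlam hSX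
  -- basic orthogonality facts
  have hφXξ : ⟪φ X, ξ⟫ = 0 := by
    rw [hskew, hφξ, inner_zero_right]; ring
  have hSφXξ : ⟪S (φ X), ξ⟫ = 0 := by
    rw [hsym, hHopf, inner_smul_right, hφXξ]; ring
  have hφSφXξ : ⟪φ (S (φ X)), ξ⟫ = 0 := by
    rw [hskew, hφξ, inner_zero_right]; ring
  -- Z := S(SX) + φ(S(φ(SX))) = lam² • X + lam • φ(S(φ X))
  set Z : V := S (S X) + φ (S (φ (S X))) with hZ
  have hZeq : Z = (lam * lam) • X + lam • φ (S (φ X)) := by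
    rw [hZ, hSX, map_smul, hSX, map_smul, map_smul, map_smul, smul_smul]
  have hZξ : ⟪Z, ξ⟫ = 0 := by
    rw [hZeq, inner_add_left, inner_smul_left, inner_smul_left, hXξ, hφSφXξ]
    simp
  have hZzero : Z = 0 := by
    have key : ∀ Y : V, ⟪Z, Y⟫ = 0 := by
      intro Y
      have hY' : ⟪Y - ⟪Y, ξ⟫ • ξ, ξ⟫ = 0 := by
        rw [inner_sub_left, real_inner_smul_left, hξ]; ring
      have h1 := hmain X (Y - ⟪Y, ξ⟫ • ξ) hXξ hY'
      rw [← hZ] at h1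
      rw [inner_sub_right, inner_smul_right, hZξ] at h1
      linarith
    exact inner_self_eq_zero.mp (key Z)
  -- hence φ(S(φ X)) = -lam • X
  have hφSφX : φ (S (φ X)) = -(lam • X) := by
    have h2 : lam • ((lam • X) + φ (S (φ X))) = 0 := by
      rw [smul_add, smul_smul, ← hZeq, hZzero]
    have h3 := smul_eq_zero.mp h2
    rcases h3 with h | h
    · exact absurd h hlam
    · exact eq_neg_of_add_eq_zero_right h
  -- apply φ
  have h4 : φ (φ (S (φ X))) = -(lam • φ X) := by
    rw [hφSφX, map_neg, map_smul]
  rw [hφ2, hSφXξ] at h4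
  simp only [zero_smul, add_zero, neg_neg] at h4
  exact neg_injective h4
end

section
/- Let V be a real inner product space with almost contact metric structure (φ, ξ, η) and S symmetric with Sξ = αξ + βU, U ⊥ ξ unit, β ≠ 0. If S satisfies the commutator condition T_X^{(k)}(L_ξ Y) = L_ξ(T_X^{(k)} Y) for all X ⊥ ξ and all Y ∈ V (with k ≠ 0), then ⟨SU, φU⟩ = 0 and 2⟨SU, U⟩ + ⟨SφU, φU⟩ = k. -/
/-!
Put `Y = ξ` in the commutation condition and pair both sides with `ξ`. Since `φξ = 0`, the left
side becomes `T_X (φSξ)`, whose `ξ`-component is `⟪φSX, φSξ⟫ + ⟪SφSξ, φX⟫`, while the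
`ξ`-component of `L_ξ Z` is `⟪Z, φSξ⟫`, so the right side contributes
`k⟪φX, φSξ⟫ - ⟪φSX, φSξ⟫`. With `φSξ = βφU` and `β ≠ 0` this reads
`2⟪SX, U⟫ + ⟪SφU, φX⟫ = k⟪X, U⟫` for every `X ⊥ ξ`; now take `X = φU` and `X = U`.
-/

open RealInnerProductSpace

namespace AlmostContactMetric

variable {V : Type*} [NormedAddCommGroup V] [InnerProductSpace ℝ V]

/-- `choOperator`, `torsionOperator` and `lieXi` are the paper's `F^{(k)}`, `T^{(k)}` and `L_ξ`. -/
def choOperator (φ S : V →ₗ[ℝ] V) (ξ : V) (k : ℝ) (X Y : V) : V :=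
  ⟪φ (S X), Y⟫ • ξ - ⟪Y, ξ⟫ • φ (S X) - (k * ⟪X, ξ⟫) • φ Y

def torsionOperator (φ S : V →ₗ[ℝ] V) (ξ : V) (k : ℝ) (X Y : V) : V :=
  choOperator φ S ξ k X Y - choOperator φ S ξ k Y X

def lieXi (φ S : V →ₗ[ℝ] V) (Y : V) : V :=
  φ (S Y) - S (φ Y)

variable {φ S : V →ₗ[ℝ] V} {ξ : V}

theorem inner_apply_xi (hskew : ∀ X Y : V, ⟪φ X, Y⟫ = -⟪X, φ Y⟫) (hφξ : φ ξ = 0) (Z : V) :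
    ⟪φ Z, ξ⟫ = 0 := by
  rw [hskew, hφξ, inner_zero_right, neg_zero]

theorem lieXi_xi (hφξ : φ ξ = 0) : lieXi φ S ξ = φ (S ξ) := by
  rw [lieXi, hφξ, map_zero, sub_zero]

theorem inner_lieXi_xi (hskew : ∀ X Y : V, ⟪φ X, Y⟫ = -⟪X, φ Y⟫) (hφξ : φ ξ = 0)
    (hsym : ∀ X Y : V, ⟪S X, Y⟫ = ⟪X, S Y⟫) (Z : V) :
    ⟪lieXi φ S Z, ξ⟫ = ⟪Z, φ (S ξ)⟫ := by
  rw [lieXi, inner_sub_left, inner_apply_xi hskew hφξ, hsym, hskew]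
  ring

theorem torsionOperator_of_inner_eq_zero (k : ℝ) {X W : V} (hX : ⟪X, ξ⟫ = 0)
    (hW : ⟪W, ξ⟫ = 0) :
    torsionOperator φ S ξ k X W = (⟪φ (S X), W⟫ - ⟪φ (S W), X⟫) • ξ := by
  simp only [torsionOperator, choOperator, hX, hW, mul_zero, zero_smul, sub_zero, sub_smul]

theorem torsionOperator_xi (hskew : ∀ X Y : V, ⟪φ X, Y⟫ = -⟪X, φ Y⟫) (hφξ : φ ξ = 0)
    (hξ : ⟪ξ, ξ⟫ = 1) (k : ℝ) {X : V} (hX : ⟪X, ξ⟫ = 0) :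
    torsionOperator φ S ξ k X ξ = k • φ X - φ (S X) - ⟪φ (S ξ), X⟫ • ξ := by
  simp only [torsionOperator, choOperator, inner_apply_xi hskew hφξ, hX, hξ, hφξ, mul_zero,
    mul_one, zero_smul, one_smul, smul_zero, sub_zero]
  abel

theorem two_inner_add_inner_eq_of_commute (hskew : ∀ X Y : V, ⟪φ X, Y⟫ = -⟪X, φ Y⟫)
    (hφξ : φ ξ = 0) (hξ : ⟪ξ, ξ⟫ = 1) (hsym : ∀ X Y : V, ⟪S X, Y⟫ = ⟪X, S Y⟫) {k : ℝ}
    {X : V} (hX : ⟪X, ξ⟫ = 0)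
    (hcomm : torsionOperator φ S ξ k X (lieXi φ S ξ) = lieXi φ S (torsionOperator φ S ξ k X ξ)) :
    2 * ⟪φ (S X), φ (S ξ)⟫ + ⟪S (φ (S ξ)), φ X⟫ = k * ⟪φ X, φ (S ξ)⟫ := by
  have hcomm_ξ := congrArg (⟪·, ξ⟫) hcomm
  simp only [lieXi_xi hφξ, torsionOperator_of_inner_eq_zero k hX (inner_apply_xi hskew hφξ _),
    inner_lieXi_xi hskew hφξ hsym, torsionOperator_xi hskew hφξ hξ k hX, inner_smul_left,
    inner_sub_left, hξ, real_inner_comm _ ξ, inner_apply_xi hskew hφξ, hskew (S (φ (S ξ))) X,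
    RCLike.conj_to_real] at hcomm_ξ
  linear_combination hcomm_ξ

end AlmostContactMetric

theorem stmt_10_general {V : Type*} [NormedAddCommGroup V] [InnerProductSpace ℝ V]
    (φ S : V →ₗ[ℝ] V) (ξ U : V) (α β k : ℝ)
    (hφ2 : ∀ X : V, φ (φ X) = -X + ⟪X, ξ⟫ • ξ)
    (hξ : ⟪ξ, ξ⟫ = 1)
    (hmetric : ∀ X Y : V, ⟪φ X, φ Y⟫ = ⟪X, Y⟫ - ⟪X, ξ⟫ * ⟪Y, ξ⟫)
    (hskew : ∀ X Y : V, ⟪φ X, Y⟫ = -⟪X, φ Y⟫)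
    (hφξ : φ ξ = 0)
    (hsym : ∀ X Y : V, ⟪S X, Y⟫ = ⟪X, S Y⟫)
    (hSξ : S ξ = α • ξ + β • U)
    (hUξ : ⟪U, ξ⟫ = 0) (hU : ‖U‖ = 1)
    (hβ : β ≠ 0)
    (hcomm : ∀ X Y : V, ⟪X, ξ⟫ = 0 →
      -- T_X^{(k)} (L_ξ Y) = L_ξ (T_X^{(k)} Y), with
      -- F_X^{(k)} Y = ⟪φSX, Y⟫ ξ - ⟪Y, ξ⟫ φSX - k ⟪X, ξ⟫ φY,
      -- T_X^{(k)} Y = F_X^{(k)} Y - F_Y^{(k)} X, L_ξ = φS - Sφ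
      ((⟪φ (S X), φ (S Y) - S (φ Y)⟫ • ξ
          - ⟪φ (S Y) - S (φ Y), ξ⟫ • φ (S X)
          - (k * ⟪X, ξ⟫) • φ (φ (S Y) - S (φ Y)))
        - (⟪φ (S (φ (S Y) - S (φ Y))), X⟫ • ξ
          - ⟪X, ξ⟫ • φ (S (φ (S Y) - S (φ Y)))
          - (k * ⟪φ (S Y) - S (φ Y), ξ⟫) • φ X))
      = (φ (S ((⟪φ (S X), Y⟫ • ξ - ⟪Y, ξ⟫ • φ (S X) - (k * ⟪X, ξ⟫) • φ Y)
            - (⟪φ (S Y), X⟫ • ξ - ⟪X, ξ⟫ • φ (S Y) - (k * ⟪Y, ξ⟫) • φ X)))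
        - S (φ ((⟪φ (S X), Y⟫ • ξ - ⟪Y, ξ⟫ • φ (S X) - (k * ⟪X, ξ⟫) • φ Y)
            - (⟪φ (S Y), X⟫ • ξ - ⟪X, ξ⟫ • φ (S Y) - (k * ⟪Y, ξ⟫) • φ X))))) :
    ⟪S U, φ U⟫ = 0 ∧ 2 * ⟪S U, U⟫ + ⟪S (φ U), φ U⟫ = k := by
  have hφSξ : φ (S ξ) = β • φ U := by
    rw [hSξ, map_add, map_smul, map_smul, hφξ, smul_zero, zero_add]
  have key : ∀ X : V, ⟪X, ξ⟫ = 0 → 2 * ⟪S X, U⟫ + ⟪S (φ U), φ X⟫ = k * ⟪X, U⟫ := by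
    intro X hX
    have h := AlmostContactMetric.two_inner_add_inner_eq_of_commute hskew hφξ hξ hsym hX
      (hcomm X ξ hX)
    simp only [hφSξ, map_smul, inner_smul_right, inner_smul_left, hmetric, hX, hUξ, mul_zero,
      sub_zero, RCLike.conj_to_real] at h
    exact mul_left_cancel₀ hβ (by linear_combination h)
  have hφφU : φ (φ U) = -U := by rw [hφ2, hUξ, zero_smul, add_zero]
  have hφUU : ⟪φ U, U⟫ = 0 := by linarith [hskew U U, real_inner_comm U (φ U)]
  have hUU : ⟪U, U⟫ = 1 := by rw [real_inner_self_eq_norm_sq, hU, one_pow]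
  have at_φU := key (φ U) (AlmostContactMetric.inner_apply_xi hskew hφξ U)
  have at_U := key U hUξ
  rw [hφφU, inner_neg_right, hφUU, hsym, real_inner_comm] at at_φU
  rw [hUU] at at_U
  constructor <;> linarith

/-- Equations (4.5) and (4.6) of the paper: if the torsion operator
commutes with `L_ξ` for all `X ⊥ ξ`, then `⟪SU, φU⟫ = 0` and
`2⟪SU, U⟫ + ⟪SφU, φU⟫ = k`. -/
theorem stmt_10 {V : Type*} [NormedAddCommGroup V] [InnerProductSpace ℝ V]
    [FiniteDimensional ℝ V]
    (φ S : V →ₗ[ℝ] V) (ξ U : V) (α β k : ℝ)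
    (hφ2 : ∀ X : V, φ (φ X) = -X + ⟪X, ξ⟫ • ξ)
    (hξ : ⟪ξ, ξ⟫ = 1)
    (hmetric : ∀ X Y : V, ⟪φ X, φ Y⟫ = ⟪X, Y⟫ - ⟪X, ξ⟫ * ⟪Y, ξ⟫)
    (hskew : ∀ X Y : V, ⟪φ X, Y⟫ = -⟪X, φ Y⟫)
    (hφξ : φ ξ = 0)
    (hsym : ∀ X Y : V, ⟪S X, Y⟫ = ⟪X, S Y⟫)
    (hSξ : S ξ = α • ξ + β • U)
    (hUξ : ⟪U, ξ⟫ = 0) (hU : ‖U‖ = 1)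
    (hβ : β ≠ 0) (hk : k ≠ 0)
    (hcomm : ∀ X Y : V, ⟪X, ξ⟫ = 0 →
      -- T_X^{(k)} (L_ξ Y) = L_ξ (T_X^{(k)} Y), with
      -- F_X^{(k)} Y = ⟪φSX, Y⟫ ξ - ⟪Y, ξ⟫ φSX - k ⟪X, ξ⟫ φY,
      -- T_X^{(k)} Y = F_X^{(k)} Y - F_Y^{(k)} X, L_ξ = φS - Sφ
      ((⟪φ (S X), φ (S Y) - S (φ Y)⟫ • ξ
          - ⟪φ (S Y) - S (φ Y), ξ⟫ • φ (S X)
          - (k * ⟪X, ξ⟫) • φ (φ (S Y) - S (φ Y)))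
        - (⟪φ (S (φ (S Y) - S (φ Y))), X⟫ • ξ
          - ⟪X, ξ⟫ • φ (S (φ (S Y) - S (φ Y)))
          - (k * ⟪φ (S Y) - S (φ Y), ξ⟫) • φ X))
      = (φ (S ((⟪φ (S X), Y⟫ • ξ - ⟪Y, ξ⟫ • φ (S X) - (k * ⟪X, ξ⟫) • φ Y)
            - (⟪φ (S Y), X⟫ • ξ - ⟪X, ξ⟫ • φ (S Y) - (k * ⟪Y, ξ⟫) • φ X)))
        - S (φ ((⟪φ (S X), Y⟫ • ξ - ⟪Y, ξ⟫ • φ (S X) - (k * ⟪X, ξ⟫) • φ Y)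
            - (⟪φ (S Y), X⟫ • ξ - ⟪X, ξ⟫ • φ (S Y) - (k * ⟪Y, ξ⟫) • φ X))))) :
    ⟪S U, φ U⟫ = 0 ∧ 2 * ⟪S U, U⟫ + ⟪S (φ U), φ U⟫ = k :=
  stmt_10_general φ S ξ U α β k hφ2 hξ hmetric hskew hφξ hsym hSξ hUξ hU hβ hcomm
end

section
/- Let V be a real inner product space with almost contact metric structure (φ, ξ, η) and S symmetric with Sξ = αξ + βU, U ⊥ ξ unit, β ≠ 0, k ≠ 0. Suppose for all X, Y ⊥ ξ: -⟨Y, φU⟩⟨SX, U⟩ + k⟨Y, φU⟩⟨X, U⟩ - ⟨φSX, Y⟩ + ⟨φSY, X⟩ = 0. Then SφU + φSU = 0, SU = βξ + kU, and SφU = -kφU. -/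
/-!
Write `σ = ⟪SU, U⟫`. Testing (4.8) against `(X, Y) = (U, φU)` and `(φU, U)` gives `σ = k`.
With `X = U` and `Y` arbitrary, (4.8) then says that `SφU + φSU` is orthogonal to `ξ^⊥`, and
its `ξ`-component vanishes as well, so `SφU = -φSU`. Feeding this back into (4.8) with
`Y = φU` shows that `SU` agrees with `kU` on `ξ^⊥`, while `⟪SU, ξ⟫ = ⟪U, Sξ⟫ = β`. Finally
`SφU = -φSU = -φ(βξ + kU) = -kφU`.
-/

open RealInnerProductSpace

section

variable {V : Type*} [NormedAddCommGroup V] [InnerProductSpace ℝ V]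

theorem eq_of_inner_eq_of_forall_orthogonal {ξ A B : V} (hξ : ⟪A, ξ⟫ = ⟪B, ξ⟫)
    (h : ∀ Y : V, ⟪Y, ξ⟫ = 0 → ⟪Y, A⟫ = ⟪Y, B⟫) : A = B := by
  have hperp : ⟪A - B, ξ⟫ = 0 := by rw [inner_sub_left, hξ, sub_self]
  rw [← sub_eq_zero, ← inner_self_eq_zero (𝕜 := ℝ), inner_sub_right, h _ hperp, sub_self]

variable {φ S : V →ₗ[ℝ] V} {ξ U : V} {α β k : ℝ}

theorem inner_self_apply_eq_zero_of_skew (hskew : ∀ X Y : V, ⟪φ X, Y⟫ = -⟪X, φ Y⟫) (X : V) :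
    ⟪X, φ X⟫ = 0 := by
  have h := hskew X X
  rw [real_inner_comm] at h
  linarith

theorem inner_apply_eq_zero_of_skew_of_apply_eq_zero
    (hskew : ∀ X Y : V, ⟪φ X, Y⟫ = -⟪X, φ Y⟫) (hφξ : φ ξ = 0) (X : V) : ⟪φ X, ξ⟫ = 0 := by
  rw [hskew, hφξ, inner_zero_right, neg_zero]

theorem inner_apply_apply_of_orthogonal
    (hmetric : ∀ X Y : V, ⟪φ X, φ Y⟫ = ⟪X, Y⟫ - ⟪X, ξ⟫ * ⟪Y, ξ⟫) (X : V) {Y : V}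
    (hY : ⟪Y, ξ⟫ = 0) : ⟪φ X, φ Y⟫ = ⟪X, Y⟫ := by
  rw [hmetric, hY, mul_zero, sub_zero]

theorem inner_apply_eq_of_apply_eq (hsym : ∀ X Y : V, ⟪S X, Y⟫ = ⟪X, S Y⟫)
    (hSξ : S ξ = α • ξ + β • U) (X : V) : ⟪S X, ξ⟫ = α * ⟪X, ξ⟫ + β * ⟪X, U⟫ := by
  rw [hsym, hSξ, inner_add_right, real_inner_smul_right, real_inner_smul_right]

theorem inner_apply_self_eq_of_eq48
    (hmetric : ∀ X Y : V, ⟪φ X, φ Y⟫ = ⟪X, Y⟫ - ⟪X, ξ⟫ * ⟪Y, ξ⟫)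
    (hskew : ∀ X Y : V, ⟪φ X, Y⟫ = -⟪X, φ Y⟫) (hφξ : φ ξ = 0)
    (hUξ : ⟪U, ξ⟫ = 0) (hUU : ⟪U, U⟫ = 1)
    (hmain : ∀ X Y : V, ⟪X, ξ⟫ = 0 → ⟪Y, ξ⟫ = 0 →
      -(⟪Y, φ U⟫ * ⟪S X, U⟫) + k * ⟪Y, φ U⟫ * ⟪X, U⟫
        - ⟪φ (S X), Y⟫ + ⟪φ (S Y), X⟫ = 0) :
    ⟪S U, U⟫ = k := by
  have hφUξ := inner_apply_eq_zero_of_skew_of_apply_eq_zero hskew hφξ U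
  have h₁ := hmain U (φ U) hUξ hφUξ
  have h₂ := hmain (φ U) U hφUξ hUξ
  rw [inner_apply_apply_of_orthogonal hmetric U hUξ, hUU,
    inner_apply_apply_of_orthogonal hmetric (S U) hUξ] at h₁
  rw [inner_self_apply_eq_zero_of_skew hskew U,
    inner_apply_apply_of_orthogonal hmetric (S U) hUξ] at h₂
  linarith

theorem apply_apply_add_apply_apply_eq_zero_of_eq48
    (hmetric : ∀ X Y : V, ⟪φ X, φ Y⟫ = ⟪X, Y⟫ - ⟪X, ξ⟫ * ⟪Y, ξ⟫)
    (hskew : ∀ X Y : V, ⟪φ X, Y⟫ = -⟪X, φ Y⟫) (hφξ : φ ξ = 0)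
    (hsym : ∀ X Y : V, ⟪S X, Y⟫ = ⟪X, S Y⟫) (hSξ : S ξ = α • ξ + β • U)
    (hUξ : ⟪U, ξ⟫ = 0) (hUU : ⟪U, U⟫ = 1)
    (hmain : ∀ X Y : V, ⟪X, ξ⟫ = 0 → ⟪Y, ξ⟫ = 0 →
      -(⟪Y, φ U⟫ * ⟪S X, U⟫) + k * ⟪Y, φ U⟫ * ⟪X, U⟫
        - ⟪φ (S X), Y⟫ + ⟪φ (S Y), X⟫ = 0) :
    S (φ U) + φ (S U) = 0 := by
  have hφ_ξ := inner_apply_eq_zero_of_skew_of_apply_eq_zero hskew hφξ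
  refine eq_of_inner_eq_of_forall_orthogonal (ξ := ξ) ?_ fun Y hY => ?_
  · rw [inner_add_left, inner_apply_eq_of_apply_eq hsym hSξ, hφ_ξ, hφ_ξ, real_inner_comm,
      inner_self_apply_eq_zero_of_skew hskew U, inner_zero_left]
    ring
  · have h := hmain U Y hUξ hY
    rw [inner_apply_self_eq_of_eq48 hmetric hskew hφξ hUξ hUU hmain, hUU, hskew (S Y) U,
      hsym Y (φ U), real_inner_comm Y (φ (S U))] at h
    rw [inner_add_right, inner_zero_right]
    linarith

theorem apply_eq_of_eq48 (hξ : ⟪ξ, ξ⟫ = 1)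
    (hmetric : ∀ X Y : V, ⟪φ X, φ Y⟫ = ⟪X, Y⟫ - ⟪X, ξ⟫ * ⟪Y, ξ⟫)
    (hskew : ∀ X Y : V, ⟪φ X, Y⟫ = -⟪X, φ Y⟫) (hφξ : φ ξ = 0)
    (hsym : ∀ X Y : V, ⟪S X, Y⟫ = ⟪X, S Y⟫) (hSξ : S ξ = α • ξ + β • U)
    (hUξ : ⟪U, ξ⟫ = 0) (hUU : ⟪U, U⟫ = 1)
    (hmain : ∀ X Y : V, ⟪X, ξ⟫ = 0 → ⟪Y, ξ⟫ = 0 →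
      -(⟪Y, φ U⟫ * ⟪S X, U⟫) + k * ⟪Y, φ U⟫ * ⟪X, U⟫
        - ⟪φ (S X), Y⟫ + ⟪φ (S Y), X⟫ = 0) :
    S U = β • ξ + k • U := by
  have hanti := apply_apply_add_apply_apply_eq_zero_of_eq48 hmetric hskew hφξ hsym hSξ hUξ hUU hmain
  refine eq_of_inner_eq_of_forall_orthogonal (ξ := ξ) ?_ fun Y hY => ?_
  · rw [inner_apply_eq_of_apply_eq hsym hSξ, inner_add_left, real_inner_smul_left,
      real_inner_smul_left, hUξ, hUU, hξ]
    ring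
  · have h := hmain Y (φ U) hY (inner_apply_eq_zero_of_skew_of_apply_eq_zero hskew hφξ U)
    rw [eq_neg_of_add_eq_zero_left hanti, map_neg, inner_neg_left, hskew (φ (S U)) Y,
      inner_apply_apply_of_orthogonal hmetric _ hY, inner_apply_apply_of_orthogonal hmetric U hUξ,
      hUU, inner_apply_apply_of_orthogonal hmetric _ hUξ, hsym Y U, real_inner_comm Y (S U)] at h
    rw [inner_add_right, real_inner_smul_right, real_inner_smul_right, hY]
    linarith

end

theorem stmt_11_general {V : Type*} [NormedAddCommGroup V] [InnerProductSpace ℝ V]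
    (φ S : V →ₗ[ℝ] V) (ξ U : V) (α β k : ℝ)
    (hξ : ⟪ξ, ξ⟫ = 1)
    (hmetric : ∀ X Y : V, ⟪φ X, φ Y⟫ = ⟪X, Y⟫ - ⟪X, ξ⟫ * ⟪Y, ξ⟫)
    (hskew : ∀ X Y : V, ⟪φ X, Y⟫ = -⟪X, φ Y⟫)
    (hφξ : φ ξ = 0)
    (hsym : ∀ X Y : V, ⟪S X, Y⟫ = ⟪X, S Y⟫)
    (hSξ : S ξ = α • ξ + β • U)
    (hUξ : ⟪U, ξ⟫ = 0) (hU : ‖U‖ = 1)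
    (hmain : ∀ X Y : V, ⟪X, ξ⟫ = 0 → ⟪Y, ξ⟫ = 0 →
      -(⟪Y, φ U⟫ * ⟪S X, U⟫) + k * ⟪Y, φ U⟫ * ⟪X, U⟫
        - ⟪φ (S X), Y⟫ + ⟪φ (S Y), X⟫ = 0) :
    S (φ U) + φ (S U) = 0 ∧ S U = β • ξ + k • U ∧ S (φ U) = -k • φ U := by
  have hUU : ⟪U, U⟫ = 1 := by rw [real_inner_self_eq_norm_sq, hU, one_pow]
  have hanti := apply_apply_add_apply_apply_eq_zero_of_eq48 hmetric hskew hφξ hsym hSξ hUξ hUU hmain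
  have hSU := apply_eq_of_eq48 hξ hmetric hskew hφξ hsym hSξ hUξ hUU hmain
  refine ⟨hanti, hSU, ?_⟩
  rw [eq_neg_of_add_eq_zero_left hanti, hSU, map_add, map_smul, map_smul, hφξ, smul_zero,
    zero_add, neg_smul]

/-- From equation (4.8) of the paper one derives `SφU + φSU = 0`,
`SU = βξ + kU` and `SφU = -kφU`. -/
theorem stmt_11 {V : Type*} [NormedAddCommGroup V] [InnerProductSpace ℝ V]
    [FiniteDimensional ℝ V]
    (φ S : V →ₗ[ℝ] V) (ξ U : V) (α β k : ℝ)
    (hφ2 : ∀ X : V, φ (φ X) = -X + ⟪X, ξ⟫ • ξ)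
    (hξ : ⟪ξ, ξ⟫ = 1)
    (hmetric : ∀ X Y : V, ⟪φ X, φ Y⟫ = ⟪X, Y⟫ - ⟪X, ξ⟫ * ⟪Y, ξ⟫)
    (hskew : ∀ X Y : V, ⟪φ X, Y⟫ = -⟪X, φ Y⟫)
    (hφξ : φ ξ = 0)
    (hsym : ∀ X Y : V, ⟪S X, Y⟫ = ⟪X, S Y⟫)
    (hSξ : S ξ = α • ξ + β • U)
    (hUξ : ⟪U, ξ⟫ = 0) (hU : ‖U‖ = 1)
    (hβ : β ≠ 0) (hk : k ≠ 0)
    (hmain : ∀ X Y : V, ⟪X, ξ⟫ = 0 → ⟪Y, ξ⟫ = 0 →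
      -(⟪Y, φ U⟫ * ⟪S X, U⟫) + k * ⟪Y, φ U⟫ * ⟪X, U⟫
        - ⟪φ (S X), Y⟫ + ⟪φ (S Y), X⟫ = 0) :
    S (φ U) + φ (S U) = 0 ∧ S U = β • ξ + k • U ∧ S (φ U) = -k • φ U :=
  stmt_11_general φ S ξ U α β k hξ hmetric hskew hφξ hsym hSξ hUξ hU hmain
end

section
/- Let V be a real inner product space with almost contact metric structure (φ, ξ, η), S symmetric with Sξ = αξ + βU (U ⊥ ξ unit, β ≠ 0), and suppose SU = βξ, SφU = 0, and SX = 0 for all X ⊥ ξ, U, φU (ruled form). Then for every X ⊥ ξ and every Y ∈ V, F_X^{(k)}(L_ξ Y) - L_ξ(F_X^{(k)}Y) = 0, where L_ξ = φS - Sφ and F_X^{(k)}Y = ⟨φSX,Y⟩ξ - η(Y)φSX - kη(X)φY with k ≠ 0. -/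
/-!
For `X ⊥ ξ`, split `X` orthogonally along `span {U, φU}`. The orthogonal part is also orthogonal
to `ξ`, hence lies in `C_U` and is killed by `S`, while `S` maps `span {U, φU}` into `ℝ ξ`, which
is killed by `φ`. So `φ S X = 0`, and with `η(X) = 0` both `F_X^{(k)}` and the commutator vanish.
-/

open RealInnerProductSpace

section

variable {V : Type*} [NormedAddCommGroup V] [InnerProductSpace ℝ V]

lemma Submodule.apply_mem_map_of_eq_zero_on_orthogonal {K : Submodule ℝ V}
    [K.HasOrthogonalProjection] {S : V →ₗ[ℝ] V} {ξ : V} (hKξ : ∀ u ∈ K, ⟪u, ξ⟫ = 0)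
    (hS : ∀ W : V, ⟪W, ξ⟫ = 0 → W ∈ Kᗮ → S W = 0) {X : V} (hX : ⟪X, ξ⟫ = 0) :
    S X ∈ K.map S := by
  have hPX : K.starProjection X ∈ K := K.starProjection_apply_mem X
  have hWξ : ⟪X - K.starProjection X, ξ⟫ = 0 := by
    rw [inner_sub_left, hX, hKξ _ hPX, sub_zero]
  have hSX : S X = S (K.starProjection X) := by
    rw [← sub_eq_zero, ← map_sub, hS _ hWξ (K.sub_starProjection_mem_orthogonal X)]
  exact hSX ▸ Submodule.mem_map_of_mem hPX

open Submodule in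
lemma apply_apply_eq_zero_of_ruled (φ S : V →ₗ[ℝ] V) (ξ U : V) (β : ℝ)
    (hskew : ∀ X Y : V, ⟪φ X, Y⟫ = -⟪X, φ Y⟫) (hφξ : φ ξ = 0) (hUξ : ⟪U, ξ⟫ = 0)
    (hSU : S U = β • ξ) (hSφU : S (φ U) = 0)
    (hruled : ∀ X : V, ⟪X, ξ⟫ = 0 → ⟪X, U⟫ = 0 → ⟪X, φ U⟫ = 0 → S X = 0)
    {X : V} (hX : ⟪X, ξ⟫ = 0) : φ (S X) = 0 := by
  let K := span ℝ {U, φ U}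
  have : FiniteDimensional ℝ K := FiniteDimensional.span_of_finite ℝ (by simp)
  have hφUξ : ⟪φ U, ξ⟫ = 0 := by rw [hskew, hφξ, inner_zero_right, neg_zero]
  have hKξ : ∀ u ∈ K, ⟪u, ξ⟫ = 0 := by
    intro u hu
    obtain ⟨a, b, rfl⟩ := mem_span_pair.mp hu
    simp [inner_add_left, real_inner_smul_left, hUξ, hφUξ]
  have hS : ∀ W : V, ⟪W, ξ⟫ = 0 → W ∈ Kᗮ → S W = 0 := fun W hWξ hW =>
    hruled W hWξ (inner_left_of_mem_orthogonal (subset_span (by simp)) hW)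
      (inner_left_of_mem_orthogonal (subset_span (by simp)) hW)
  have hKφ : K.map S ≤ LinearMap.ker φ := by
    rw [map_span_le]
    rintro v (rfl | rfl) <;> simp [hSU, hSφU, hφξ]
  exact hKφ (apply_mem_map_of_eq_zero_on_orthogonal hKξ hS hX)

end

theorem stmt_16_general {V : Type*} [NormedAddCommGroup V] [InnerProductSpace ℝ V]
    (φ S : V →ₗ[ℝ] V) (ξ U : V) (β k : ℝ)
    (hskew : ∀ X Y : V, ⟪φ X, Y⟫ = -⟪X, φ Y⟫)
    (hφξ : φ ξ = 0)
    (hUξ : ⟪U, ξ⟫ = 0)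
    (hSU : S U = β • ξ)
    (hSφU : S (φ U) = 0)
    (hruled : ∀ X : V, ⟪X, ξ⟫ = 0 → ⟪X, U⟫ = 0 → ⟪X, φ U⟫ = 0 → S X = 0) :
    ∀ X Y : V, ⟪X, ξ⟫ = 0 →
      ((⟪φ (S X), φ (S Y) - S (φ Y)⟫ • ξ
          - ⟪φ (S Y) - S (φ Y), ξ⟫ • φ (S X)
          - (k * ⟪X, ξ⟫) • φ (φ (S Y) - S (φ Y)))
        - (φ (S (⟪φ (S X), Y⟫ • ξ - ⟪Y, ξ⟫ • φ (S X) - (k * ⟪X, ξ⟫) • φ Y))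
          - S (φ (⟪φ (S X), Y⟫ • ξ - ⟪Y, ξ⟫ • φ (S X) - (k * ⟪X, ξ⟫) • φ Y)))) = 0 := by
  intro X Y hX
  rw [apply_apply_eq_zero_of_ruled φ S ξ U β hskew hφξ hUξ hSU hSφU hruled hX, hX]
  simp

/-- Converse direction of Theorem 1.2 for ruled hypersurfaces: if
`Sξ = αξ + βU`, `SU = βξ`, `SφU = 0` and `S = 0` on `C_U`, then the Cho
commutator `F_X^{(k)} L_ξ Y - L_ξ F_X^{(k)} Y` vanishes for `X ⊥ ξ`. -/
theorem stmt_16 {V : Type*} [NormedAddCommGroup V] [InnerProductSpace ℝ V]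
    [FiniteDimensional ℝ V]
    (φ S : V →ₗ[ℝ] V) (ξ U : V) (α β k : ℝ)
    (hφ2 : ∀ X : V, φ (φ X) = -X + ⟪X, ξ⟫ • ξ)
    (hξ : ⟪ξ, ξ⟫ = 1)
    (hmetric : ∀ X Y : V, ⟪φ X, φ Y⟫ = ⟪X, Y⟫ - ⟪X, ξ⟫ * ⟪Y, ξ⟫)
    (hskew : ∀ X Y : V, ⟪φ X, Y⟫ = -⟪X, φ Y⟫)
    (hφξ : φ ξ = 0)
    (hsym : ∀ X Y : V, ⟪S X, Y⟫ = ⟪X, S Y⟫)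
    (hSξ : S ξ = α • ξ + β • U)
    (hUξ : ⟪U, ξ⟫ = 0) (hU : ‖U‖ = 1)
    (hβ : β ≠ 0) (hk : k ≠ 0)
    (hSU : S U = β • ξ)
    (hSφU : S (φ U) = 0)
    (hruled : ∀ X : V, ⟪X, ξ⟫ = 0 → ⟪X, U⟫ = 0 → ⟪X, φ U⟫ = 0 → S X = 0) :
    ∀ X Y : V, ⟪X, ξ⟫ = 0 →
      ((⟪φ (S X), φ (S Y) - S (φ Y)⟫ • ξ
          - ⟪φ (S Y) - S (φ Y), ξ⟫ • φ (S X)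
          - (k * ⟪X, ξ⟫) • φ (φ (S Y) - S (φ Y)))
        - (φ (S (⟪φ (S X), Y⟫ • ξ - ⟪Y, ξ⟫ • φ (S X) - (k * ⟪X, ξ⟫) • φ Y))
          - S (φ (⟪φ (S X), Y⟫ • ξ - ⟪Y, ξ⟫ • φ (S X) - (k * ⟪X, ξ⟫) • φ Y)))) = 0 :=
  stmt_16_general φ S ξ U β k hskew hφξ hUξ hSU hSφU hruled
end

section
/- Let V be a real inner product space with almost contact metric structure (φ, ξ, η) and S symmetric with Sξ = αξ. For k ≠ 0, if T_ξ^{(k)}(L_ξ X) - L_ξ(T_ξ^{(k)} X) = 0 for all X ∈ V, where T_X^{(k)}Y = F_X^{(k)}Y - F_Y^{(k)}X, F_X^{(k)}Y = ⟨φSX,Y⟩ξ - η(Y)φSX - kη(X)φY, L_ξ = φS - Sφ, and additionally (φS - Sφ)φSX = k(φS - Sφ)φX holds for all X ⊥ ξ, then φS = Sφ. -/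
open RealInnerProductSpace

/-- Hopf case of Theorem 1.3: the torsion commutator condition at `ξ`
together with `(φS - Sφ)φSX = k(φS - Sφ)φX` on `ξ^⊥` forces `φS = Sφ`. -/
theorem stmt_19 {V : Type*} [NormedAddCommGroup V] [InnerProductSpace ℝ V]
    [FiniteDimensional ℝ V]
    (φ S : V →ₗ[ℝ] V) (ξ : V) (α k : ℝ)
    (hφ2 : ∀ X : V, φ (φ X) = -X + ⟪X, ξ⟫ • ξ)
    (hξ : ⟪ξ, ξ⟫ = 1)
    (hmetric : ∀ X Y : V, ⟪φ X, φ Y⟫ = ⟪X, Y⟫ - ⟪X, ξ⟫ * ⟪Y, ξ⟫)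
    (hskew : ∀ X Y : V, ⟪φ X, Y⟫ = -⟪X, φ Y⟫)
    (hφξ : φ ξ = 0)
    (hsym : ∀ X Y : V, ⟪S X, Y⟫ = ⟪X, S Y⟫)
    (hHopf : S ξ = α • ξ)
    (hk : k ≠ 0)
    (hcomm : ∀ X : V,
      ((⟪φ (S ξ), φ (S X) - S (φ X)⟫ • ξ
          - ⟪φ (S X) - S (φ X), ξ⟫ • φ (S ξ)
          - (k * ⟪ξ, ξ⟫) • φ (φ (S X) - S (φ X)))
        - (⟪φ (S (φ (S X) - S (φ X))), ξ⟫ • ξ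
          - ⟪ξ, ξ⟫ • φ (S (φ (S X) - S (φ X)))
          - (k * ⟪φ (S X) - S (φ X), ξ⟫) • φ ξ))
      - (φ (S ((⟪φ (S ξ), X⟫ • ξ - ⟪X, ξ⟫ • φ (S ξ) - (k * ⟪ξ, ξ⟫) • φ X)
            - (⟪φ (S X), ξ⟫ • ξ - ⟪ξ, ξ⟫ • φ (S X) - (k * ⟪X, ξ⟫) • φ ξ)))
        - S (φ ((⟪φ (S ξ), X⟫ • ξ - ⟪X, ξ⟫ • φ (S ξ) - (k * ⟪ξ, ξ⟫) • φ X)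
            - (⟪φ (S X), ξ⟫ • ξ - ⟪ξ, ξ⟫ • φ (S X) - (k * ⟪X, ξ⟫) • φ ξ)))) = 0)
    (heig : ∀ X : V, ⟪X, ξ⟫ = 0 →
      φ (S (φ (S X))) - S (φ (φ (S X))) = k • (φ (S (φ X)) - S (φ (φ X)))) :
    ∀ X : V, φ (S X) = S (φ X) := by
  have hφSξ : φ (S ξ) = 0 := by rw [hHopf, map_smul, hφξ, smul_zero]
  have hAξ : ∀ Z : V, ⟪φ Z, ξ⟫ = 0 := by
    intro Z; rw [hskew, hφξ, inner_zero_right]; ring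
  have hA : ∀ Z : V, ⟪φ (S Z), ξ⟫ = 0 := fun Z => hAξ (S Z)
  have hB : ∀ Z : V, ⟪φ (S Z) - S (φ Z), ξ⟫ = 0 := by
    intro Z
    rw [inner_sub_left, hA, hsym, hHopf, real_inner_smul_right, hAξ]
    ring
  -- Step 1: S (L X) = k • L X for X ⊥ ξ
  have hSLperp : ∀ X : V, ⟪X, ξ⟫ = 0 →
      S (φ (S X) - S (φ X)) = k • (φ (S X) - S (φ X)) := by
    intro X hX
    have hc := hcomm X
    have he := heig X hX
    simp only [hφSξ, hφξ, hξ, hX, hA, hB, inner_zero_left, inner_zero_right,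
      zero_smul, smul_zero, mul_zero, mul_one, one_smul, sub_zero, zero_sub,
      inner_sub_left, sub_self, map_neg, map_sub, map_smul, map_zero, neg_neg] at hc
    -- hc should now say: (something) = 0
    -- derive: φ (S (φ (S X) - S (φ X))) - k • φ (φ (S X) - S (φ X)) = 0
    have he' : φ (S (φ (S X))) - S (φ (φ (S X)))
        - k • (φ (S (φ X)) - S (φ (φ X))) = 0 := by rw [he]; abel
    have h1 : φ (S (φ (S X) - S (φ X)) - k • (φ (S X) - S (φ X))) = 0 := by
      simp only [map_sub, map_smul]
      linear_combination (norm := module) hc + he'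
    have h2 := hφ2 (S (φ (S X) - S (φ X)) - k • (φ (S X) - S (φ X)))
    rw [h1, map_zero] at h2
    have h3 : ⟪S (φ (S X) - S (φ X)) - k • (φ (S X) - S (φ X)), ξ⟫ = 0 := by
      rw [inner_sub_left, real_inner_smul_left, hsym, hHopf,
        real_inner_smul_right, hB]
      ring
    rw [h3, zero_smul, add_zero, eq_comm, neg_eq_zero, sub_eq_zero] at h2
    exact h2
  -- Step 2: S (L X) = k • L X for all X
  have hSL : ∀ X : V, S (φ (S X) - S (φ X)) = k • (φ (S X) - S (φ X)) := by
    intro X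
    have hperp : ⟪X - ⟪X, ξ⟫ • ξ, ξ⟫ = 0 := by
      rw [inner_sub_left, real_inner_smul_left, hξ]; ring
    have key := hSLperp (X - ⟪X, ξ⟫ • ξ) hperp
    have hLeq : φ (S (X - ⟪X, ξ⟫ • ξ)) - S (φ (X - ⟪X, ξ⟫ • ξ))
        = φ (S X) - S (φ X) := by
      simp only [map_sub, map_smul, hφSξ, hφξ, smul_zero, map_zero]
      abel
    rwa [hLeq] at key
  -- Step 3: for Y = L X, show S (φ Y) = k • φ Y
  intro X
  set Y := φ (S X) - S (φ X) with hY
  have hSY : S Y = k • Y := hSL X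
  have hSLY := hSL Y
  rw [hSY, map_smul] at hSLY
  -- S (k • φ Y - S (φ Y)) = k • (k • φ Y - S (φ Y))
  set Z := S (φ Y) - k • φ Y with hZ
  have hSZ : S Z = k • Z := by
    have : S (k • φ Y - S (φ Y)) = k • (k • φ Y - S (φ Y)) := hSLY
    simp only [map_sub, map_smul] at this
    rw [hZ, map_sub, map_smul]
    linear_combination (norm := module) - this
  have hZ0 : Z = 0 := by
    have : ⟪Z, Z⟫ = 0 := by
      calc ⟪Z, Z⟫ = ⟪S (φ Y), Z⟫ - k * ⟪φ Y, Z⟫ := by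
            rw [hZ, inner_sub_left, real_inner_smul_left]
        _ = ⟪φ Y, S Z⟫ - k * ⟪φ Y, Z⟫ := by rw [hsym]
        _ = 0 := by rw [hSZ, real_inner_smul_right]; ring
    exact inner_self_eq_zero.mp this
  have hSφY : S (φ Y) = k • φ Y := by
    have := sub_eq_zero.mp hZ0; rwa [hZ, sub_eq_zero] at hZ0
  -- Step 4: ‖Y‖² = 0
  have hYY : ⟪Y, Y⟫ = 0 := by
    have e1 : ⟪φ (S X), Y⟫ = -(k * ⟪X, φ Y⟫) := by
      rw [hskew, hsym, hSφY, real_inner_smul_right]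
    have e2 : ⟪S (φ X), Y⟫ = -(k * ⟪X, φ Y⟫) := by
      rw [hsym, hSY, real_inner_smul_right, hskew]
      ring
    rw [hY, inner_sub_left, e1, e2]
    ring
  have : Y = 0 := inner_self_eq_zero.mp hYY
  rw [hY, sub_eq_zero] at this
  exact this
end
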